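/- Let G be the 'diamond' graph on vertices v₁, v₂, v₃, v₄ with all edges present except v₂v₄, with a proper coloring α using colors in {1,...,9} (no vertex colored 10), and lists L(v₁), L(v₄) of size at least 2 and L(v₂), L(v₃) of size at least 4, all lists subsets of {1,...,9}. Then there exists a once-only recoloring from α to a proper L-coloring of G. -/

import Mathlib

/-- A once-only recoloring of `G` from `α` to a proper `L`-coloring: there is an
ordering of the vertices (given by injective `ord`) and target colors `γ v ∈ L v`
such that recoloring the vertices one by one in this order keeps the coloring
proper at every step, each vertex being recolored at most once. -/
def OnceOnly {V : Type} [Fintype V] (G : SimpleGraph V) (α : V → ℕ)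
    (L : V → Finset ℕ) : Prop :=
  ∃ (γ : V → ℕ) (ord : V → ℕ), Function.Injective ord ∧ (∀ v, γ v ∈ L v) ∧
    ∀ (i : ℕ) (u v : V), G.Adj u v →
      (if ord u < i then γ u else α u) ≠ (if ord v < i then γ v else α v)

/-- The diamond on v₁,v₂,v₃,v₄ (all edges except v₂v₄), here on Fin 4 with
v₂ = 1 and v₄ = 3. -/
def diamond : SimpleGraph (Fin 4) :=
  SimpleGraph.fromRel fun a b => ¬ ((a = 1 ∧ b = 3) ∨ (a = 3 ∧ b = 1))

lemma adj01 : diamond.Adj 0 1 := by rw [diamond, SimpleGraph.fromRel_adj]; exact ⟨by decide, Or.inl (by decide)⟩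
lemma adj02 : diamond.Adj 0 2 := by rw [diamond, SimpleGraph.fromRel_adj]; exact ⟨by decide, Or.inl (by decide)⟩
lemma adj03 : diamond.Adj 0 3 := by rw [diamond, SimpleGraph.fromRel_adj]; exact ⟨by decide, Or.inl (by decide)⟩
lemma adj12 : diamond.Adj 1 2 := by rw [diamond, SimpleGraph.fromRel_adj]; exact ⟨by decide, Or.inl (by decide)⟩
lemma adj23 : diamond.Adj 2 3 := by rw [diamond, SimpleGraph.fromRel_adj]; exact ⟨by decide, Or.inl (by decide)⟩
lemma nadj13 : ¬ diamond.Adj 1 3 := by rw [diamond, SimpleGraph.fromRel_adj]; decide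
lemma nadj31 : ¬ diamond.Adj 3 1 := by rw [diamond, SimpleGraph.fromRel_adj]; decide

lemma step_aux {a b ga gb : ℕ} (ou ov i : ℕ) (h1 : a ≠ b) (h4 : ga ≠ gb)
    (h2 : ou < ov → ga ≠ b) (h3 : ov < ou → gb ≠ a) :
    (if ou < i then ga else a) ≠ (if ov < i then gb else b) := by
  by_cases hu : ou < i <;> by_cases hv : ov < i <;>
    simp only [hu, hv, if_true, if_false, if_pos, if_neg, not_false_iff]
  · exact h4
  · exact h2 (by omega)
  · exact fun hh => (h3 (by omega)) hh.symm
  · exact h1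

lemma build' (α : Fin 4 → ℕ) (L : Fin 4 → Finset ℕ)
    (g0 g1 g2 g3 o0 o1 o2 o3 : ℕ)
    (hinj : Function.Injective ![o0,o1,o2,o3])
    (hm0 : g0 ∈ L 0) (hm1 : g1 ∈ L 1) (hm2 : g2 ∈ L 2) (hm3 : g3 ∈ L 3)
    (e01 : α 0 ≠ α 1) (e02 : α 0 ≠ α 2) (e03 : α 0 ≠ α 3) (e12 : α 1 ≠ α 2) (e23 : α 2 ≠ α 3)
    (f01 : g0 ≠ g1) (f02 : g0 ≠ g2) (f03 : g0 ≠ g3) (f12 : g1 ≠ g2) (f23 : g2 ≠ g3)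
    (d01 : o0 < o1 → g0 ≠ α 1) (d10 : o1 < o0 → g1 ≠ α 0)
    (d02 : o0 < o2 → g0 ≠ α 2) (d20 : o2 < o0 → g2 ≠ α 0)
    (d03 : o0 < o3 → g0 ≠ α 3) (d30 : o3 < o0 → g3 ≠ α 0)
    (d12 : o1 < o2 → g1 ≠ α 2) (d21 : o2 < o1 → g2 ≠ α 1)
    (d23 : o2 < o3 → g2 ≠ α 3) (d32 : o3 < o2 → g3 ≠ α 2) :
    OnceOnly diamond α L := by
  refine ⟨![g0,g1,g2,g3], ![o0,o1,o2,o3], hinj, ?_, ?_⟩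
  · intro v; fin_cases v <;> simpa
  · intro i u v h
    fin_cases u <;> fin_cases v <;>
      simp only [Matrix.cons_val_zero, Matrix.cons_val_one, Matrix.head_cons,
        Matrix.cons_val_two, Matrix.tail_cons, Matrix.cons_val_three,
        Matrix.cons_val_fin_one, Fin.isValue] <;>
      first
      | exact absurd h diamond.irrefl
      | exact absurd h nadj13
      | exact absurd h nadj31
      | exact step_aux _ _ _ e01 f01 d01 (fun hh => d10 hh)
      | exact step_aux _ _ _ e01.symm f01.symm d10 (fun hh => d01 hh)
      | exact step_aux _ _ _ e02 f02 d02 (fun hh => d20 hh)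
      | exact step_aux _ _ _ e02.symm f02.symm d20 (fun hh => d02 hh)
      | exact step_aux _ _ _ e03 f03 d03 (fun hh => d30 hh)
      | exact step_aux _ _ _ e03.symm f03.symm d30 (fun hh => d03 hh)
      | exact step_aux _ _ _ e12 f12 d12 (fun hh => d21 hh)
      | exact step_aux _ _ _ e12.symm f12.symm d21 (fun hh => d12 hh)
      | exact step_aux _ _ _ e23 f23 d23 (fun hh => d32 hh)
      | exact step_aux _ _ _ e23.symm f23.symm d32 (fun hh => d23 hh)

lemma pick_aux {L s : Finset ℕ} (h : s.card < L.card) : ∃ c ∈ L, c ∉ s := by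
  by_contra hc
  push_neg at hc
  exact absurd (Finset.card_le_card hc) (by omega)

lemma cle2 (a b : ℕ) : ({a, b} : Finset ℕ).card ≤ 2 := by
  apply (Finset.card_insert_le _ _).trans; simp

lemma cle3 (a b c : ℕ) : ({a, b, c} : Finset ℕ).card ≤ 3 := by
  have := cle2 b c
  have := Finset.card_insert_le a ({b, c} : Finset ℕ)
  omega

lemma cle4 (a b c d : ℕ) : ({a, b, c, d} : Finset ℕ).card ≤ 4 := by
  have := cle3 b c d
  have := Finset.card_insert_le a ({b, c, d} : Finset ℕ)
  omega

lemma pick2 {L : Finset ℕ} (h : 3 ≤ L.card) (a b : ℕ) : ∃ x ∈ L, x ≠ a ∧ x ≠ b := by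
  obtain ⟨x, hx, hn⟩ := pick_aux (s := {a, b}) (L := L) (by have := cle2 a b; omega)
  simp only [Finset.mem_insert, Finset.mem_singleton, not_or] at hn
  exact ⟨x, hx, hn⟩

lemma pick3 {L : Finset ℕ} (h : 4 ≤ L.card) (a b c : ℕ) : ∃ x ∈ L, x ≠ a ∧ x ≠ b ∧ x ≠ c := by
  obtain ⟨x, hx, hn⟩ := pick_aux (s := {a, b, c}) (L := L) (by have := cle3 a b c; omega)
  simp only [Finset.mem_insert, Finset.mem_singleton, not_or] at hn
  exact ⟨x, hx, hn⟩

/-- Lemma 16 (diamond): with no vertex colored 10, lists in {1,…,9} described by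
(2,4,4,2), the diamond admits a once-only recoloring. -/
theorem stmt11 (α : Fin 4 → ℕ) (L : Fin 4 → Finset ℕ)
    (hαrange : ∀ v, α v ∈ Finset.Icc 1 9)
    (hproper : ∀ u v, diamond.Adj u v → α u ≠ α v)
    (hLrange : ∀ v, L v ⊆ Finset.Icc 1 9)
    (hL0 : 2 ≤ (L 0).card) (hL1 : 4 ≤ (L 1).card)
    (hL2 : 4 ≤ (L 2).card) (hL3 : 2 ≤ (L 3).card) :
    OnceOnly diamond α L := by
  have p01 := hproper 0 1 adj01
  have p02 := hproper 0 2 adj02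
  have p03 := hproper 0 3 adj03
  have p12 := hproper 1 2 adj12
  have p23 := hproper 2 3 adj23
  by_cases hA : ∃ c ∈ L 0, c ≠ α 1 ∧ c ≠ α 2 ∧ c ≠ α 3
  · -- Case A
    obtain ⟨c0, hc0m, hc01, hc02, hc03⟩ := hA
    by_cases hA1 : ∃ c ∈ L 3, c ≠ c0 ∧ c ≠ α 2
    · -- A1 : order 0,1,3,2
      obtain ⟨c3, hc3m, hc30, hc32⟩ := hA1
      obtain ⟨g1, hg1m, hg10, hg12⟩ := pick2 (L := L 1) (by omega) c0 (α 2)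
      obtain ⟨g2, hg2m, h2a, h2b, h2c⟩ := pick3 (L := L 2) hL2 c0 g1 c3
      exact build' α L c0 g1 g2 c3 0 1 3 2 (by decide) hc0m hg1m hg2m hc3m
        p01 p02 p03 p12 p23
        (by omega) (by omega) (by omega) (by omega) (by omega)
        (by omega) (by omega) (by omega) (by omega) (by omega)
        (by omega) (by omega) (by omega) (by omega) (by omega)
    · -- A2 : order 0,1,2,3, γ3 = α 2
      push_neg at hA1
      have hsub : L 3 ⊆ {c0, α 2} := by
        intro x hx
        simp only [Finset.mem_insert, Finset.mem_singleton]
        by_cases h1 : x = c0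
        · exact Or.inl h1
        · exact Or.inr (hA1 x hx h1)
      have heq : L 3 = {c0, α 2} :=
        Finset.eq_of_subset_of_card_le hsub (by have := cle2 c0 (α 2); omega)
      have hα2L3 : α 2 ∈ L 3 := by rw [heq]; simp
      obtain ⟨c2, hc2m, hc2a, hc2b, hc2c⟩ := pick3 (L := L 2) hL2 c0 (α 3) (α 2)
      obtain ⟨g1, hg1m, hg1a, hg1b, hg1c⟩ := pick3 (L := L 1) hL1 c0 (α 2) c2
      exact build' α L c0 g1 c2 (α 2) 0 1 2 3 (by decide) hc0m hg1m hc2m hα2L3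
        p01 p02 p03 p12 p23
        (by omega) (by omega) (by omega) (by omega) (by omega)
        (by omega) (by omega) (by omega) (by omega) (by omega)
        (by omega) (by omega) (by omega) (by omega) (by omega)
  · -- Case B : L 0 ⊆ {α 1, α 2, α 3}
    push_neg at hA
    by_cases hB1 : α 2 ∈ L 0
    · -- B1 : γ0 = α 2
      obtain ⟨c2, hc2m, hc2a, hc2b, hc2c⟩ := pick3 (L := L 2) hL2 (α 0) (α 2) (α 3)
      by_cases hg3 : ∃ c ∈ L 3, c ≠ α 2 ∧ c ≠ c2
      · -- B1a : order 1,2,0,3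
        obtain ⟨g3, hg3m, hg3a, hg3b⟩ := hg3
        obtain ⟨g1, hg1m, hg1a, hg1b, hg1c⟩ := pick3 (L := L 1) hL1 (α 0) (α 2) c2
        exact build' α L (α 2) g1 c2 g3 2 0 1 3 (by decide) hB1 hg1m hc2m hg3m
          p01 p02 p03 p12 p23
          (by omega) (by omega) (by omega) (by omega) (by omega)
          (by omega) (by omega) (by omega) (by omega) (by omega)
          (by omega) (by omega) (by omega) (by omega) (by omega)
      · push_neg at hg3
        have hsub3 : L 3 ⊆ {α 2, c2} := by
          intro x hx
          simp only [Finset.mem_insert, Finset.mem_singleton]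
          by_cases h1 : x = α 2
          · exact Or.inl h1
          · exact Or.inr (hg3 x hx h1)
        have heq3 : L 3 = {α 2, c2} :=
          Finset.eq_of_subset_of_card_le hsub3 (by have := cle2 (α 2) c2; omega)
        have hc2L3 : c2 ∈ L 3 := by rw [heq3]; simp
        by_cases hc2' : ∃ c ∈ L 2, (c ≠ α 0 ∧ c ≠ α 2 ∧ c ≠ α 3) ∧ c ≠ c2
        · -- B1b : order 1,2,0,3 with γ2 = c2', γ3 = c2
          obtain ⟨c2', hc2'm, ⟨hc2'a, hc2'b, hc2'c⟩, hc2'd⟩ := hc2'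
          obtain ⟨g1, hg1m, hg1a, hg1b, hg1c⟩ := pick3 (L := L 1) hL1 (α 0) (α 2) c2'
          exact build' α L (α 2) g1 c2' c2 2 0 1 3 (by decide) hB1 hg1m hc2'm hc2L3
            p01 p02 p03 p12 p23
            (by omega) (by omega) (by omega) (by omega) (by omega)
            (by omega) (by omega) (by omega) (by omega) (by omega)
            (by omega) (by omega) (by omega) (by omega) (by omega)
        · -- B1c : order 3,1,2,0 with γ = (α 2, g1, α 3, c2)
          push_neg at hc2'
          have hsub2 : L 2 ⊆ {α 0, α 2, α 3, c2} := by
            intro x hx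
            simp only [Finset.mem_insert, Finset.mem_singleton]
            by_cases h1 : x = α 0
            · exact Or.inl h1
            by_cases h2 : x = α 2
            · exact Or.inr (Or.inl h2)
            by_cases h3 : x = α 3
            · exact Or.inr (Or.inr (Or.inl h3))
            · exact Or.inr (Or.inr (Or.inr (hc2' x hx ⟨h1, h2, h3⟩)))
          have heq2 : L 2 = {α 0, α 2, α 3, c2} :=
            Finset.eq_of_subset_of_card_le hsub2 (by have := cle4 (α 0) (α 2) (α 3) c2; omega)
          have hα3L2 : α 3 ∈ L 2 := by rw [heq2]; simp
          obtain ⟨g1, hg1m, hg1a, hg1b, hg1c⟩ := pick3 (L := L 1) hL1 (α 0) (α 2) (α 3)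
          exact build' α L (α 2) g1 (α 3) c2 3 1 2 0 (by decide) hB1 hg1m hα3L2 hc2L3
            p01 p02 p03 p12 p23
            (by omega) (by omega) (by omega) (by omega) (by omega)
            (by omega) (by omega) (by omega) (by omega) (by omega)
            (by omega) (by omega) (by omega) (by omega) (by omega)
    · -- B2 : L 0 = {α 1, α 3}
      have hsub0 : L 0 ⊆ {α 1, α 3} := by
        intro x hx
        simp only [Finset.mem_insert, Finset.mem_singleton]
        by_cases h1 : x = α 1
        · exact Or.inl h1
        · have h2 : x ≠ α 2 := fun hh => hB1 (hh ▸ hx)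
          exact Or.inr (hA x hx h1 h2)
      have heq0 : L 0 = {α 1, α 3} :=
        Finset.eq_of_subset_of_card_le hsub0 (by have := cle2 (α 1) (α 3); omega)
      have hα1L0 : α 1 ∈ L 0 := by rw [heq0]; simp
      have hα3L0 : α 3 ∈ L 0 := by rw [heq0]; simp
      have h13 : α 1 ≠ α 3 := by
        intro hh
        rw [heq0, hh] at hL0
        have : ({α 3, α 3} : Finset ℕ).card = 1 := by simp
        omega
      by_cases hc3 : ∃ c ∈ L 3, c ≠ α 0 ∧ c ≠ α 2 ∧ c ≠ α 3
      · -- B2a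
        obtain ⟨c3, hc3m, hc3a, hc3b, hc3c⟩ := hc3
        by_cases hc2 : ∃ c ∈ L 2, (c ≠ c3 ∧ c ≠ α 0 ∧ c ≠ α 3) ∧ c ≠ α 1
        · -- B2a-i : order 3,2,0,1, γ = (α 3, g1, c2, c3)
          obtain ⟨c2, hc2m, ⟨hc2a, hc2b, hc2c⟩, hc2d⟩ := hc2
          obtain ⟨g1, hg1m, hg1a, hg1b⟩ := pick2 (L := L 1) (by omega) (α 3) c2
          exact build' α L (α 3) g1 c2 c3 2 3 1 0 (by decide) hα3L0 hg1m hc2m hc3m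
            p01 p02 p03 p12 p23
            (by omega) (by omega) (by omega) (by omega) (by omega)
            (by omega) (by omega) (by omega) (by omega) (by omega)
            (by omega) (by omega) (by omega) (by omega) (by omega)
        · -- B2a-ii : L 2 = {c3, α 0, α 3, α 1}; order 1,0,3,2, γ = (α 1, g1, α 0, c3)
          push_neg at hc2
          have hsub2 : L 2 ⊆ {c3, α 0, α 3, α 1} := by
            intro x hx
            simp only [Finset.mem_insert, Finset.mem_singleton]
            by_cases h1 : x = c3
            · exact Or.inl h1
            by_cases h2 : x = α 0
            · exact Or.inr (Or.inl h2)
            by_cases h3 : x = α 3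
            · exact Or.inr (Or.inr (Or.inl h3))
            · exact Or.inr (Or.inr (Or.inr (hc2 x hx ⟨h1, h2, h3⟩)))
          have heq2 : L 2 = {c3, α 0, α 3, α 1} :=
            Finset.eq_of_subset_of_card_le hsub2 (by have := cle4 c3 (α 0) (α 3) (α 1); omega)
          have hα0L2 : α 0 ∈ L 2 := by rw [heq2]; simp
          have hc31 : c3 ≠ α 1 := by
            intro hh
            have h4le : 4 ≤ ({c3, α 0, α 3, α 1} : Finset ℕ).card := heq2 ▸ hL2
            rw [hh] at h4le
            have hle : ({α 1, α 0, α 3, α 1} : Finset ℕ).card ≤ 3 := by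
              refine le_trans (Finset.card_le_card ?_) (cle3 (α 1) (α 0) (α 3))
              intro x hx
              simp only [Finset.mem_insert, Finset.mem_singleton] at hx ⊢
              tauto
            omega
          obtain ⟨g1, hg1m, hg1a, hg1b, hg1c⟩ := pick3 (L := L 1) hL1 (α 0) (α 1) (α 2)
          exact build' α L (α 1) g1 (α 0) c3 1 0 3 2 (by decide) hα1L0 hg1m hα0L2 hc3m
            p01 p02 p03 p12 p23
            (by omega) (by omega) (by omega) (by omega) (by omega)
            (by omega) (by omega) (by omega) (by omega) (by omega)
            (by omega) (by omega) (by omega) (by omega) (by omega)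
      · -- B2b : L 3 ⊆ {α 0, α 2, α 3}
        push_neg at hc3
        by_cases hα0 : α 0 ∈ L 3
        · -- B2b-i : order 1,0,3,2, γ = (α 1, g1, g2, α 0)
          obtain ⟨g1, hg1m, hg1a, hg1b, hg1c⟩ := pick3 (L := L 1) hL1 (α 0) (α 1) (α 2)
          obtain ⟨g2, hg2m, hg2a, hg2b, hg2c⟩ := pick3 (L := L 2) hL2 (α 0) (α 1) g1
          exact build' α L (α 1) g1 g2 (α 0) 1 0 3 2 (by decide) hα1L0 hg1m hg2m hα0
            p01 p02 p03 p12 p23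
            (by omega) (by omega) (by omega) (by omega) (by omega)
            (by omega) (by omega) (by omega) (by omega) (by omega)
            (by omega) (by omega) (by omega) (by omega) (by omega)
        · -- B2b-ii : L 3 = {α 2, α 3}; order 1,0,2,3, γ = (α 1, g1, g2, α 3)
          have hsub3 : L 3 ⊆ {α 2, α 3} := by
            intro x hx
            simp only [Finset.mem_insert, Finset.mem_singleton]
            have h1 : x ≠ α 0 := fun hh => hα0 (hh ▸ hx)
            by_cases h2 : x = α 2
            · exact Or.inl h2
            · exact Or.inr (hc3 x hx h1 h2)
          have heq3 : L 3 = {α 2, α 3} :=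
            Finset.eq_of_subset_of_card_le hsub3 (by have := cle2 (α 2) (α 3); omega)
          have hα3L3 : α 3 ∈ L 3 := by rw [heq3]; simp
          obtain ⟨g1, hg1m, hg1a, hg1b, hg1c⟩ := pick3 (L := L 1) hL1 (α 0) (α 1) (α 2)
          obtain ⟨g2, hg2m, hg2a, hg2b, hg2c⟩ := pick3 (L := L 2) hL2 (α 1) g1 (α 3)
          exact build' α L (α 1) g1 g2 (α 3) 1 0 2 3 (by decide) hα1L0 hg1m hg2m hα3L3
            p01 p02 p03 p12 p23
            (by omega) (by omega) (by omega) (by omega) (by omega)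
            (by omega) (by omega) (by omega) (by omega) (by omega)
            (by omega) (by omega) (by omega) (by omega) (by omega)
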